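/- Let v : ℝ² → ℝ² be a unit Lipschitz vector field with constant K and 0 < T < 1/K. For every F ∈ L¹(ℝ²), for almost every s ∈ [−T/2, T/2], for almost every (x,y) ∈ ℝ², lim_{t→0} (1/(2t))∫_{−t}^{t} F[(x,y) + β·v(S_s^{−1}(x,y))] dβ = F(x,y), where S_s(X) = X + s·v(X). -/

import Mathlib

/-!
For `|s| K < 1` the map `S_s = id + s • v` is bi-Lipschitz, so `Φ (X, σ) = S_σ X` pushes the
product measure on the strip `ℝ² × (-c, c)` forward to a measure dominated by a multiple of
Lebesgue measure, and `F ∘ Φ` is integrable on the strip. The key observation is that the line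
through `S_s X` in direction `v (S_s⁻¹ (S_s X)) = v X` is `σ ↦ Φ (X, σ)` reparametrised, so the
averages in question are one-dimensional averages of `σ ↦ F (Φ (X, σ))` around `σ = s`. Lebesgue's
differentiation theorem in `σ` for a.e. `X`, followed by Fubini, gives the limit for a.e. `s` and
a.e. `X`; since `S_s` is bijective and Lipschitz, a.e. `X` may then be replaced by a.e. `S_s X`.
Fubini needs a measurable Lebesgue-point condition, so it is tested along the radii `1 / m` only
and extended to all radii by monotonicity of `r ↦ ∫_{-r}^{r} |f (x + β) - f x| dβ`.
-/

open MeasureTheory Measure Filter Set Function Module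
open scoped NNReal ENNReal Topology

section HaarLipschitz

variable {E : Type*} [NormedAddCommGroup E] [NormedSpace ℝ E] [FiniteDimensional ℝ E]
  [MeasurableSpace E] [BorelSpace E] (μ : Measure E) [μ.IsAddHaarMeasure]

theorem addHaar_le_mul_of_hausdorffMeasure_le {s t : Set E} {C : ℝ≥0∞}
    (h : μH[finrank ℝ E] s ≤ C * μH[finrank ℝ E] t) : μ s ≤ C * μ t := by
  have hμ (u : Set E) : μ u = addHaarScalarFactor μ μH[finrank ℝ E] * μH[finrank ℝ E] u := by
    conv_lhs => rw [isAddLeftInvariant_eq_smul μ μH[finrank ℝ E]]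
    rfl
  rw [hμ, hμ, mul_left_comm]
  gcongr

theorem LipschitzWith.addHaar_image_le {K : ℝ≥0} {f : E → E} (hf : LipschitzWith K f)
    (s : Set E) : μ (f '' s) ≤ (K : ℝ≥0∞) ^ finrank ℝ E * μ s := by
  apply addHaar_le_mul_of_hausdorffMeasure_le
  simpa using hf.hausdorffMeasure_image_le (Nat.cast_nonneg (finrank ℝ E)) s

theorem AntilipschitzWith.addHaar_preimage_le {K : ℝ≥0} {f : E → E}
    (hf : AntilipschitzWith K f) (s : Set E) :
    μ (f ⁻¹' s) ≤ (K : ℝ≥0∞) ^ finrank ℝ E * μ s := by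
  apply addHaar_le_mul_of_hausdorffMeasure_le
  simpa using hf.hausdorffMeasure_preimage_le (Nat.cast_nonneg (finrank ℝ E)) s

theorem LipschitzWith.ae_of_ae_comp {K : ℝ≥0} {f : E → E} (hf : LipschitzWith K f)
    (hsurj : Surjective f) {P : E → Prop} (h : ∀ᵐ x ∂μ, P (f x)) : ∀ᵐ y ∂μ, P y := by
  rw [ae_iff] at h ⊢
  have himage : {y | ¬P y} = f '' {x | ¬P (f x)} := (image_preimage_eq _ hsurj).symm
  rw [himage, ← nonpos_iff_eq_zero]
  simpa [h] using hf.addHaar_image_le μ {x | ¬P (f x)}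

end HaarLipschitz

section PerturbationOfIdentity

variable {E : Type*} [NormedAddCommGroup E] {g : E → E} {k : ℝ≥0}

theorem LipschitzWith.surjective_id_add [CompleteSpace E] (hg : LipschitzWith k g) (hk : k < 1) :
    Surjective fun x => x + g x := by
  intro y
  have hcontr : ContractingWith k fun x => y - g x :=
    ⟨hk, (LipschitzWith.const y).sub hg |>.weaken (by simp)⟩
  obtain ⟨x, hx, -⟩ := hcontr.exists_fixedPoint y (edist_ne_top _ _)
  exact ⟨x, by simpa [eq_sub_iff_add_eq] using hx.eq.symm⟩

theorem LipschitzWith.antilipschitzWith_id_add (hg : LipschitzWith k g) (hk : k < 1) :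
    AntilipschitzWith (1 - k)⁻¹ fun x => x + g x := by
  simpa using AntilipschitzWith.id.add_lipschitzWith hg (by simpa using hk)

end PerturbationOfIdentity

noncomputable def symmetricAverage (f : ℝ → ℝ) (x t : ℝ) : ℝ :=
  (1 / (2 * t)) * ∫ β in (-t)..t, f (x + β)

noncomputable def deviationIntegral (f : ℝ → ℝ) (x r : ℝ) : ℝ :=
  ∫ β in (-r)..r, |f (x + β) - f x|

theorem tendsto_inv_mul_nhdsGT_zero_of_monotoneOn {J : ℝ → ℝ} (hJ : MonotoneOn J (Ioi 0))
    (hJ0 : ∀ t, 0 < t → 0 ≤ J t) (h : Tendsto (fun m : ℕ => (m : ℝ) * J (m : ℝ)⁻¹) atTop (𝓝 0)) :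
    Tendsto (fun t => t⁻¹ * J t) (𝓝[>] 0) (𝓝 0) := by
  have hfloor : Tendsto (fun t : ℝ => ⌊t⁻¹⌋₊) (𝓝[>] 0) atTop :=
    tendsto_nat_floor_atTop.comp tendsto_inv_nhdsGT_zero
  have hbound : ∀ᶠ t in 𝓝[>] 0, t⁻¹ * J t ≤ 2 * (⌊t⁻¹⌋₊ * J (⌊t⁻¹⌋₊ : ℝ)⁻¹) := by
    filter_upwards [Ioo_mem_nhdsGT one_pos] with t ⟨ht0, ht1⟩
    have hm1 : (1 : ℝ) ≤ ⌊t⁻¹⌋₊ := by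
      exact_mod_cast Nat.one_le_floor_iff _ |>.2 (one_le_inv₀ ht0 |>.2 ht1.le)
    have hmt : (⌊t⁻¹⌋₊ : ℝ) ≤ t⁻¹ := Nat.floor_le (inv_nonneg.2 ht0.le)
    have htm : t⁻¹ < ⌊t⁻¹⌋₊ + 1 := Nat.lt_floor_add_one _
    have htle : t ≤ (⌊t⁻¹⌋₊ : ℝ)⁻¹ := by
      rwa [le_inv_comm₀ ht0 (by positivity)]
    calc t⁻¹ * J t ≤ (2 * ⌊t⁻¹⌋₊) * J (⌊t⁻¹⌋₊ : ℝ)⁻¹ :=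
          mul_le_mul (by linarith) (hJ ht0 (mem_Ioi.2 (inv_pos.2 (by linarith))) htle)
            (hJ0 t ht0) (by positivity)
      _ = _ := by ring
  refine squeeze_zero' ?_ hbound (by simpa using (h.comp hfloor).const_mul 2)
  filter_upwards [self_mem_nhdsWithin] with t ht
  exact mul_nonneg (inv_nonneg.2 (le_of_lt ht)) (hJ0 t ht)

theorem setAverage_closedBall_norm_sub_eq {f : ℝ → ℝ} (x : ℝ) {r : ℝ} (hr : 0 < r) :
    ⨍ y in Metric.closedBall x r, ‖f y - f x‖ = (2 * r)⁻¹ * deviationIntegral f x r := by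
  rw [setAverage_eq, measureReal_def, Real.volume_closedBall,
    ENNReal.toReal_ofReal (by positivity), Real.closedBall_eq_Icc, integral_Icc_eq_integral_Ioc,
    ← intervalIntegral.integral_of_le (by linarith), deviationIntegral,
    intervalIntegral.integral_comp_add_left (fun y => |f y - f x|)]
  simp [Real.norm_eq_abs, sub_eq_add_neg]

theorem ae_tendsto_deviationIntegral {f : ℝ → ℝ} (hf : Integrable f) :
    ∀ᵐ x, Tendsto (fun m : ℕ => (m : ℝ) * deviationIntegral f x (m : ℝ)⁻¹) atTop (𝓝 0) := by
  have hinv : Tendsto (fun m : ℕ => (m : ℝ)⁻¹) atTop (𝓝[>] 0) :=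
    tendsto_inv_atTop_nhdsGT_zero.comp tendsto_natCast_atTop_atTop
  filter_upwards [IsUnifLocDoublingMeasure.ae_tendsto_average_norm_sub volume
    hf.locallyIntegrable 1] with x hx
  have hlim := (hx (fun _ => x) _ hinv (Eventually.of_forall fun m => by simp)).const_mul 2
  rw [mul_zero] at hlim
  refine hlim.congr' ?_
  filter_upwards [eventually_gt_atTop 0] with m hm
  rw [setAverage_closedBall_norm_sub_eq x (by positivity)]
  field_simp

theorem tendsto_symmetricAverage_of_tendsto_deviationIntegral {f : ℝ → ℝ} (hf : Integrable f)
    {x : ℝ} (h : Tendsto (fun m : ℕ => (m : ℝ) * deviationIntegral f x (m : ℝ)⁻¹) atTop (𝓝 0)) :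
    Tendsto (symmetricAverage f x) (𝓝[>] 0) (𝓝 (f x)) := by
  have hint (t : ℝ) : IntervalIntegrable (fun β => f (x + β) - f x) volume (-t) t :=
    ((hf.comp_add_left x).intervalIntegrable).sub intervalIntegrable_const
  have hmono : MonotoneOn (deviationIntegral f x) (Ioi 0) := fun a ha b _ hab =>
    intervalIntegral.integral_mono_interval (by linarith) (by linarith [mem_Ioi.1 ha]) hab
      (Eventually.of_forall fun _ => abs_nonneg _) (hint b).abs
  have hnonneg (t : ℝ) (ht : 0 < t) : 0 ≤ deviationIntegral f x t :=
    intervalIntegral.integral_nonneg (by linarith) fun _ _ => abs_nonneg _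
  have hdev := tendsto_inv_mul_nhdsGT_zero_of_monotoneOn hmono hnonneg h
  rw [tendsto_iff_norm_sub_tendsto_zero]
  refine squeeze_zero' (Eventually.of_forall fun _ => norm_nonneg _) ?_ hdev
  filter_upwards [self_mem_nhdsWithin] with t (ht : 0 < t)
  have hsub : symmetricAverage f x t - f x = (2 * t)⁻¹ * ∫ β in (-t)..t, (f (x + β) - f x) := by
    rw [symmetricAverage, intervalIntegral.integral_sub (hf.comp_add_left x).intervalIntegrable
      intervalIntegrable_const, intervalIntegral.integral_const, smul_eq_mul]
    field_simp
    ring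
  rw [Real.norm_eq_abs, hsub, abs_mul, abs_of_pos (by positivity)]
  calc (2 * t)⁻¹ * |∫ β in (-t)..t, (f (x + β) - f x)|
      ≤ (2 * t)⁻¹ * deviationIntegral f x t := by
        gcongr; exact intervalIntegral.abs_integral_le_integral_abs (by linarith)
    _ ≤ t⁻¹ * deviationIntegral f x t :=
        mul_le_mul_of_nonneg_right (inv_anti₀ ht (by linarith)) (hnonneg t ht)

theorem symmetricAverage_eventuallyEq {f g : ℝ → ℝ} {U : Set ℝ} {x : ℝ} (hU : U ∈ 𝓝 x)
    (hfg : f =ᵐ[volume.restrict U] g) : symmetricAverage f x =ᶠ[𝓝[>] 0] symmetricAverage g x := by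
  obtain ⟨ε, hε, hball⟩ := Metric.mem_nhds_iff.1 hU
  have hfg' : ∀ᵐ β, x + β ∈ Metric.ball x ε → f (x + β) = g (x + β) :=
    (measurePreserving_add_left volume x).quasiMeasurePreserving.ae
      ((ae_restrict_iff' Metric.isOpen_ball.measurableSet).1
        (ae_restrict_of_ae_restrict_of_subset hball hfg))
  filter_upwards [Ioo_mem_nhdsGT hε] with t ht
  rw [symmetricAverage, symmetricAverage, intervalIntegral.integral_congr_ae]
  filter_upwards [hfg'] with β hβ hβt
  rw [uIoc_of_le (by linarith [ht.1])] at hβt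
  apply hβ
  rw [Metric.mem_ball, dist_self_add_left, Real.norm_eq_abs, abs_lt]
  constructor <;> linarith [hβt.1, hβt.2, ht.2]

section Fibre

variable {α : Type*} [MeasurableSpace α] {ν : Measure α}

theorem measurable_deviationIntegral_fibre {G : α × ℝ → ℝ} (hG : StronglyMeasurable G) {r : ℝ}
    (hr : 0 ≤ r) : Measurable fun p : α × ℝ => deviationIntegral (fun σ => G (p.1, σ)) p.2 r := by
  simp_rw [deviationIntegral, intervalIntegral.integral_of_le (neg_le_self hr)]
  have : StronglyMeasurable fun q : (α × ℝ) × ℝ => |G (q.1.1, q.1.2 + q.2) - G q.1| := by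
    have := hG.measurable
    exact Measurable.stronglyMeasurable (by fun_prop)
  exact this.integral_prod_right'.measurable

theorem ae_prod_tendsto_deviationIntegral {G : α × ℝ → ℝ} (hG : StronglyMeasurable G)
    (hG' : ∀ᵐ a ∂ν, Integrable fun σ => G (a, σ)) :
    ∀ᵐ p ∂ν.prod volume,
      Tendsto (fun m : ℕ => (m : ℝ) * deviationIntegral (fun σ => G (p.1, σ)) p.2 (m : ℝ)⁻¹)
        atTop (𝓝 0) := by
  rw [ae_prod_iff_ae_ae (measurableSet_tendsto _ fun m =>
    (measurable_deviationIntegral_fibre hG (by positivity)).const_mul _)]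
  filter_upwards [hG'] with a ha
  exact ae_tendsto_deviationIntegral ha

theorem ae_tendsto_symmetricAverage_fibre [SFinite ν] {U : Set ℝ} (hU : IsOpen U)
    {H : α × ℝ → ℝ} (hH : Integrable H (ν.prod (volume.restrict U))) :
    ∀ᵐ p ∂ν.prod (volume.restrict U),
      Tendsto (symmetricAverage (fun σ => H (p.1, σ)) p.2) (𝓝[>] 0) (𝓝 (H p)) := by
  obtain ⟨H₀, hH₀, hHH₀⟩ := hH.aestronglyMeasurable
  set G := (Prod.snd ⁻¹' U).indicator H₀
  have hG : StronglyMeasurable G := hH₀.indicator (measurable_snd hU.measurableSet)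
  have hGfibre : ∀ᵐ a ∂ν, Integrable fun σ => G (a, σ) := by
    filter_upwards [(hH.congr hHH₀).prod_right_ae] with a ha
    exact (integrable_indicator_iff hU.measurableSet).2 ha
  have hac : ν.prod (volume.restrict U) ≪ ν.prod volume :=
    AbsolutelyContinuous.rfl.prod (absolutelyContinuous_of_le restrict_le_self)
  filter_upwards [hac.ae_le (ae_prod_tendsto_deviationIntegral hG hGfibre), hHH₀,
    quasiMeasurePreserving_fst.ae (ae_ae_of_ae_prod hHH₀),
    quasiMeasurePreserving_fst.ae hGfibre,
    quasiMeasurePreserving_snd.ae (ae_restrict_mem hU.measurableSet)]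
    with ⟨a, s⟩ hdev hs hfibre hint hsU
  have hG₀ : ∀ σ ∈ U, G (a, σ) = H₀ (a, σ) := fun σ hσ =>
    indicator_of_mem (show (a, σ) ∈ Prod.snd ⁻¹' U from hσ) H₀
  rw [hs, ← hG₀ s hsU]
  refine (tendsto_symmetricAverage_of_tendsto_deviationIntegral hint hdev).congr'
    (symmetricAverage_eventuallyEq (hU.mem_nhds hsU) ?_)
  filter_upwards [hfibre, ae_restrict_mem hU.measurableSet] with σ hσ hσU
  rw [hG₀ σ hσU, hσ]

end Fibre

theorem nnnorm_mul_le_toNNReal_mul {c σ : ℝ} (hσ : σ ∈ Ioo (-c) c) (K : ℝ≥0) :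
    ‖σ‖₊ * K ≤ (c * K).toNNReal := by
  rw [← NNReal.coe_le_coe, NNReal.coe_mul, coe_nnnorm, Real.coe_toNNReal']
  exact le_max_of_le_left (by gcongr; exact abs_le.2 ⟨hσ.1.le, hσ.2.le⟩)

namespace LipschitzWith

variable {E : Type*} [NormedAddCommGroup E] [NormedSpace ℝ E] {v : E → E} {K : ℝ≥0}

theorem antilipschitzWith_add_smul (hv : LipschitzWith K v) {s : ℝ} {k : ℝ≥0}
    (hs : ‖s‖₊ * K ≤ k) (hk : k < 1) : AntilipschitzWith (1 - k)⁻¹ fun x => x + s • v x :=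
  (((lipschitzWith_smul s).comp hv).weaken hs).antilipschitzWith_id_add hk

theorem surjective_add_smul [CompleteSpace E] (hv : LipschitzWith K v) {s : ℝ}
    (hs : ‖s‖₊ * K < 1) : Surjective fun x => x + s • v x :=
  ((lipschitzWith_smul s).comp hv).surjective_id_add hs

theorem lipschitzWith_add_smul (hv : LipschitzWith K v) (s : ℝ) :
    LipschitzWith (1 + ‖s‖₊ * K) fun x => x + s • v x :=
  LipschitzWith.id.add ((lipschitzWith_smul s).comp hv)

theorem continuous_prod_add_smul (hv : LipschitzWith K v) :
    Continuous fun p : E × ℝ => p.1 + p.2 • v p.1 := by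
  have := hv.continuous
  fun_prop

variable [FiniteDimensional ℝ E] [MeasurableSpace E] [BorelSpace E] (μ : Measure E)
  [μ.IsAddHaarMeasure]

theorem map_prod_add_smul_le (hv : LipschitzWith K v) {c : ℝ} (hc : c * K < 1) :
    ∃ C : ℝ≥0∞, C ≠ ∞ ∧
      (μ.prod (volume.restrict (Ioo (-c) c))).map (fun p : E × ℝ => p.1 + p.2 • v p.1) ≤
        C • μ := by
  set k : ℝ≥0 := (c * K).toNNReal
  have hk : k < 1 := by simpa [k] using hc
  have hΦ := hv.continuous_prod_add_smul.measurable
  refine ⟨((1 - k)⁻¹ : ℝ≥0) ^ finrank ℝ E * volume (Ioo (-c) c),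
    ENNReal.mul_ne_top (by simp) measure_Ioo_lt_top.ne, le_intro fun A hA _ => ?_⟩
  rw [map_apply hΦ hA, prod_apply_symm (hΦ hA), Measure.smul_apply, smul_eq_mul]
  calc ∫⁻ σ in Ioo (-c) c, μ ((fun x => x + σ • v x) ⁻¹' A)
      ≤ ∫⁻ σ in Ioo (-c) c, ((1 - k)⁻¹ : ℝ≥0) ^ finrank ℝ E * μ A :=
        setLIntegral_mono' measurableSet_Ioo fun σ hσ =>
          (hv.antilipschitzWith_add_smul (nnnorm_mul_le_toNNReal_mul hσ K) hk).addHaar_preimage_le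
            μ A
    _ = _ := by rw [setLIntegral_const]; ring

theorem integrable_comp_add_smul_prod (hv : LipschitzWith K v) {c : ℝ} (hc : c * K < 1)
    {F : E → ℝ} (hF : Integrable F μ) :
    Integrable (fun p : E × ℝ => F (p.1 + p.2 • v p.1))
      (μ.prod (volume.restrict (Ioo (-c) c))) := by
  obtain ⟨C, hC, hle⟩ := hv.map_prod_add_smul_le μ hc
  exact ((hF.smul_measure hC).mono_measure hle).comp_measurable
    hv.continuous_prod_add_smul.measurable

theorem ae_ae_tendsto_symmetricAverage_add_smul (hv : LipschitzWith K v) {c : ℝ}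
    (hc : c * K < 1) {F : E → ℝ} (hF : Integrable F μ) :
    ∀ᵐ s ∂volume.restrict (Ioo (-c) c), ∀ᵐ x ∂μ,
      Tendsto (symmetricAverage (fun σ => F (x + σ • v x)) s) (𝓝[>] 0)
        (𝓝 (F (x + s • v x))) :=
  ae_ae_of_ae_prod <| measurePreserving_swap.quasiMeasurePreserving.ae <|
    ae_tendsto_symmetricAverage_fibre isOpen_Ioo (hv.integrable_comp_add_smul_prod μ hc hF)

theorem ae_ae_tendsto_lineAverage (hv : LipschitzWith K v) {c : ℝ} (hc : c * K < 1)
    {F : E → ℝ} (hF : Integrable F μ) :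
    ∀ᵐ s ∂volume.restrict (Ioo (-c) c), ∀ᵐ x ∂μ,
      Tendsto (fun t : ℝ => (1 / (2 * t)) *
          ∫ β in (-t)..t, F (x + β • v (invFun (fun y => y + s • v y) x)))
        (𝓝[>] 0) (𝓝 (F x)) := by
  filter_upwards [hv.ae_ae_tendsto_symmetricAverage_add_smul μ hc hF,
    ae_restrict_mem measurableSet_Ioo] with s hs hsc
  have hsK : ‖s‖₊ * K < 1 :=
    (nnnorm_mul_le_toNNReal_mul hsc K).trans_lt (by simpa using hc)
  have hinj := (hv.antilipschitzWith_add_smul le_rfl hsK).injective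
  refine (hv.lipschitzWith_add_smul s).ae_of_ae_comp μ (hv.surjective_add_smul hsK) ?_
  filter_upwards [hs] with x hx
  have hinv : invFun (fun y => y + s • v y) (x + s • v x) = x := leftInverse_invFun hinj x
  refine hx.congr fun t => ?_
  simp only [symmetricAverage, hinv, add_smul, add_assoc]

end LipschitzWith

theorem zygmund_weak_conjecture_general
    (v : EuclideanSpace ℝ (Fin 2) → EuclideanSpace ℝ (Fin 2)) (K T : ℝ)
    (hlip : ∀ X Y, ‖v X - v Y‖ ≤ K * ‖X - Y‖)
    (hT : T < 1 / K)
    (F : EuclideanSpace ℝ (Fin 2) → ℝ) (hF : Integrable F volume) :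
    ∀ᵐ s ∂(volume.restrict (Set.Icc (-(T / 2)) (T / 2))),
      ∀ᵐ X ∂(volume : Measure (EuclideanSpace ℝ (Fin 2))),
        Tendsto (fun t : ℝ => (1 / (2 * t)) *
            ∫ β in (-t)..t, F (X + β • v (Function.invFun (fun Y => Y + s • v Y) X)))
          (nhdsWithin 0 (Set.Ioi 0)) (nhds (F X)) := by
  have hv : LipschitzWith K.toNNReal v :=
    LipschitzWith.of_dist_le' fun X Y => by simpa only [dist_eq_norm] using hlip X Y
  have hc : T / 2 * K.toNNReal < 1 := by
    rcases le_or_gt K 0 with hK | hK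
    · simp [Real.toNNReal_of_nonpos hK]
    · rw [Real.coe_toNNReal _ hK.le]
      rw [lt_div_iff₀ hK] at hT
      linarith
  rw [← restrict_congr_set Ioo_ae_eq_Icc]
  exact hv.ae_ae_tendsto_lineAverage volume hc hF

theorem zygmund_weak_conjecture
    (v : EuclideanSpace ℝ (Fin 2) → EuclideanSpace ℝ (Fin 2)) (K T : ℝ)
    (hK : 0 < K) (hlip : ∀ X Y, ‖v X - v Y‖ ≤ K * ‖X - Y‖)
    (hunit : ∀ X, ‖v X‖ = 1) (hT0 : 0 < T) (hT : T < 1 / K)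
    (F : EuclideanSpace ℝ (Fin 2) → ℝ) (hF : Integrable F volume) :
    ∀ᵐ s ∂(volume.restrict (Set.Icc (-(T / 2)) (T / 2))),
      ∀ᵐ X ∂(volume : Measure (EuclideanSpace ℝ (Fin 2))),
        Tendsto (fun t : ℝ => (1 / (2 * t)) *
            ∫ β in (-t)..t, F (X + β • v (Function.invFun (fun Y => Y + s • v Y) X)))
          (nhdsWithin 0 (Set.Ioi 0)) (nhds (F X)) :=
  zygmund_weak_conjecture_general v K T hlip hT F hF
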